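/- arXiv:2204.06968 — 4 statements merged into one kernel-verified Lean document; each statement's English description precedes it below -/
import Mathlib

section
/- Let 𝔽 be a field of characteristic zero, let p, q ∈ 𝔽[x_1,…,x_n], and let {S_0, S_1, …, S_m} be an admissible cover of S_{p,q}. Then for every ℓ ∈ {0, 1, …, m}, either V_𝔽(S_0 ∪ ⋯ ∪ S_{ℓ−1}) = ∅ (the union being empty and its zero set all of 𝔽^n when ℓ = 0), or for every point s ∈ V_𝔽(S_0 ∪ ⋯ ∪ S_{ℓ−1}) one has V_𝔽(S_0 ∪ ⋯ ∪ S_ℓ) = V_𝔽(L_{a=s}(S_0) ∪ ⋯ ∪ L_{a=s}(S_ℓ)). In particular, the nonlinear polynomial system S_{p,q} defining the dispersion set F_{p,q} can be solved by successively solving linear systems. -/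
open MvPolynomial

noncomputable section

variable {F : Type*} [Field F] [CharZero F] {n : ℕ}

/-- `p(x+a) - q(x)` as a polynomial in the variables `x` with coefficients in `F[a]`. -/
def shiftDiff (p q : MvPolynomial (Fin n) F) :
    MvPolynomial (Fin n) (MvPolynomial (Fin n) F) :=
  aeval (fun i => X i + C (X i)) p - map C q

/-- The set `S_{p,q} ⊆ F[a]` of coefficients of `p(x+a) - q(x)` with respect to `x`. -/
def coeffSet (p q : MvPolynomial (Fin n) F) : Set (MvPolynomial (Fin n) F) :=
  {c | ∃ α ∈ (shiftDiff p q).support, c = coeff α (shiftDiff p q)}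

/-- The zero set `V_F(P)` of a set of polynomials `P ⊆ F[a]`. -/
def zeroSet (P : Set (MvPolynomial (Fin n) F)) : Set (Fin n → F) :=
  {s | ∀ f ∈ P, eval s f = 0}

/-- The linearization `L_{a=s}(f) = H^0(f) + H^1(f) + ∑_{i≥2} H^i(f)(s)`. -/
def linearize (s : Fin n → F) (f : MvPolynomial (Fin n) F) : MvPolynomial (Fin n) F :=
  homogeneousComponent 0 f + homogeneousComponent 1 f +
    C (∑ i ∈ Finset.Icc 2 f.totalDegree, eval s (homogeneousComponent i f))

/-- `{S 0, …, S m}` is an admissible cover of `S_{p,q}`: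
the sets cover `S_{p,q}`, all members of `S 0` have total degree at most one in `a`,
and whenever `c_α ∈ S ℓ` (`1 ≤ ℓ ≤ m`) and `β > α` with `x^β` occurring in
`p(x+a) - q(x)`, then `c_β ∈ S 0 ∪ ⋯ ∪ S (ℓ-1)`. -/
def IsAdmissibleCover (p q : MvPolynomial (Fin n) F) (m : ℕ)
    (S : ℕ → Set (MvPolynomial (Fin n) F)) : Prop :=
  (⋃ i ∈ Finset.range (m + 1), S i) = coeffSet p q ∧
  (∀ c ∈ S 0, c.totalDegree ≤ 1) ∧
  (∀ ℓ, 1 ≤ ℓ → ℓ ≤ m → ∀ α ∈ (shiftDiff p q).support,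
      coeff α (shiftDiff p q) ∈ S ℓ →
      ∀ β ∈ (shiftDiff p q).support, α < β →
        coeff β (shiftDiff p q) ∈ ⋃ i ∈ Finset.range ℓ, S i)

/-!
Write `c_α(a)` for the coefficient of `x^α` in `p(x+a) - q(x)`, and suppose `s` and `t` both
kill every `c_β` with `β > α`. With `r = p(x+s)` and `u = t - s`, the difference `r(x+u) - r`
has no monomial strictly above `x^α`; since a shift `x ↦ x + w` only moves coefficients to
componentwise smaller exponents, the coefficients of `r(x + k u)` at exponents `≥ α` are affine
in `k ∈ ℕ`. Shifting back by `-s` shows that `k ↦ c_α(k u)` is affine with slope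
`c_α(t) - c_α(s)`, and comparing with the homogeneous expansion of `c_α` along the line through
`u` gives `H¹(c_α)(t - s) = c_α(t) - c_α(s)`, i.e. `L_{a=s}(c_α)(t) = c_α(t)`. Members of `S 0`
are their own linearizations, and admissibility supplies the vanishing hypotheses by induction
on `ℓ`.
-/

section Shift

variable {σ R : Type*}

section CommSemiring

variable [CommSemiring R]

def shift (w : σ → R) : MvPolynomial σ R →ₐ[R] MvPolynomial σ R :=
  aeval fun i => X i + C (w i)

@[simp]
lemma shift_X (w : σ → R) (i : σ) : shift w (X i) = X i + C (w i) :=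
  aeval_X _ _

@[simp]
lemma shift_zero (P : MvPolynomial σ R) : shift 0 P = P := by
  simp [shift]

lemma shift_shift (v w : σ → R) (P : MvPolynomial σ R) :
    shift v (shift w P) = shift (v + w) P := by
  change ((shift v).comp (shift w)) P = _
  congr 1
  refine algHom_ext fun i => ?_
  simp only [AlgHom.comp_apply, shift_X, map_add, Pi.add_apply]
  simp [shift, algebraMap_eq, add_assoc]

def IsMonicBelow (P : MvPolynomial σ R) (δ : σ →₀ ℕ) : Prop :=
  (∀ β ∈ P.support, β ≤ δ) ∧ coeff δ P = 1

lemma IsMonicBelow.mul {P Q : MvPolynomial σ R} {δ₁ δ₂ : σ →₀ ℕ}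
    (hP : IsMonicBelow P δ₁) (hQ : IsMonicBelow Q δ₂) : IsMonicBelow (P * Q) (δ₁ + δ₂) := by
  classical
  refine ⟨fun β hβ => ?_, ?_⟩
  · obtain ⟨a, ha, b, hb, rfl⟩ := Finset.mem_add.mp (support_mul P Q hβ)
    exact add_le_add (hP.1 a ha) (hQ.1 b hb)
  · rw [coeff_mul, Finset.sum_eq_single (δ₁, δ₂), hP.2, hQ.2, one_mul]
    · rintro ⟨a, b⟩ hab hne
      by_contra h
      obtain ⟨ha, hb⟩ := ne_zero_and_ne_zero_of_mul h
      refine hne (Prod.ext_iff.mpr ?_)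
      exact (add_eq_add_iff_eq_and_eq (hP.1 a (mem_support_iff.mpr ha))
        (hQ.1 b (mem_support_iff.mpr hb))).mp (Finset.HasAntidiagonal.mem_antidiagonal.mp hab)
    · simp

lemma isMonicBelow_one : IsMonicBelow (1 : MvPolynomial σ R) 0 := by
  classical
  refine ⟨fun β hβ => ?_, coeff_zero_one⟩
  rw [mem_support_iff, coeff_one] at hβ
  split_ifs at hβ with h
  · exact h.ge
  · exact absurd rfl hβ

lemma isMonicBelow_X_add_C (i : σ) (c : R) : IsMonicBelow (X i + C c) (Finsupp.single i 1) := by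
  classical
  refine ⟨fun β hβ => ?_, ?_⟩
  · by_contra hle
    rw [mem_support_iff, coeff_add, coeff_X, coeff_C, if_neg fun h => hle h.ge,
      if_neg fun (h : 0 = β) => hle (h ▸ zero_le), add_zero] at hβ
    exact hβ rfl
  · rw [coeff_add, coeff_X, coeff_C, if_pos rfl,
      if_neg (Finsupp.single_ne_zero.mpr one_ne_zero).symm, add_zero]

lemma isMonicBelow_shift_monomial (w : σ → R) (γ : σ →₀ ℕ) :
    IsMonicBelow (shift w (monomial γ 1)) γ := by
  have hadd : ∀ {γ₁ γ₂}, IsMonicBelow (shift w (monomial γ₁ 1)) γ₁ →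
      IsMonicBelow (shift w (monomial γ₂ 1)) γ₂ →
      IsMonicBelow (shift w (monomial (γ₁ + γ₂) 1)) (γ₁ + γ₂) := fun h₁ h₂ => by
    rw [← mul_one (1 : R), ← monomial_mul, map_mul]
    exact h₁.mul h₂
  induction γ using Finsupp.induction_linear with
  | zero => simpa using isMonicBelow_one
  | add γ₁ γ₂ h₁ h₂ => exact hadd h₁ h₂
  | single i k =>
    induction k with
    | zero => simpa using isMonicBelow_one
    | succ k ih =>
      rw [Finsupp.single_add]
      refine hadd ih ?_
      change IsMonicBelow (shift w (X i)) _
      exact shift_X w i ▸ isMonicBelow_X_add_C i (w i)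

end CommSemiring

variable [CommRing R]

lemma coeff_shift_eq_of_coeff_eq {P Q : MvPolynomial σ R} {α : σ →₀ ℕ} (w : σ → R)
    (h : ∀ γ, α ≤ γ → coeff γ P = coeff γ Q) :
    coeff α (shift w P) = coeff α (shift w Q) := by
  rw [← sub_eq_zero, ← coeff_sub, ← map_sub, as_sum (P - Q), map_sum, coeff_sum]
  refine Finset.sum_eq_zero fun γ _ => ?_
  rw [← mul_one (coeff γ (P - Q)), ← smul_eq_mul, ← smul_monomial, map_smul, coeff_smul,
    smul_eq_mul]
  by_cases hαγ : α ≤ γ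
  · rw [coeff_sub, h γ hαγ, sub_self, zero_mul]
  · rw [notMem_support_iff.mp fun hα => hαγ ((isMonicBelow_shift_monomial w γ).1 α hα), mul_zero]

lemma coeff_shift_of_coeff_eq_zero {P : MvPolynomial σ R} {α : σ →₀ ℕ} (w : σ → R)
    (h : ∀ γ, α < γ → coeff γ P = 0) :
    coeff α (shift w P) = coeff α P := by
  classical
  have hP : coeff α (shift w P) = coeff α (shift w (monomial α (coeff α P))) := by
    refine coeff_shift_eq_of_coeff_eq w fun γ hγ => ?_
    rcases hγ.eq_or_lt with rfl | hlt
    · rw [coeff_monomial, if_pos rfl]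
    · rw [h γ hlt, coeff_monomial, if_neg hlt.ne]
  rw [hP, ← mul_one (coeff α P), ← smul_eq_mul, ← smul_monomial, map_smul, coeff_smul,
    (isMonicBelow_shift_monomial w α).2]

lemma coeff_shift_nsmul {P : MvPolynomial σ R} {α : σ →₀ ℕ} {u : σ → R}
    (h : ∀ β, α < β → coeff β (shift u P) = coeff β P) (k : ℕ) :
    ∀ β, α ≤ β → coeff β (shift (k • u) P) = coeff β (P + k • (shift u P - P)) := by
  have hstep : ∀ γ, α < γ → coeff γ (shift u P - P) = 0 := fun γ hγ => by
    rw [coeff_sub, h γ hγ, sub_self]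
  induction k with
  | zero => simp
  | succ k ih =>
    intro β hβ
    have hshift : shift ((k + 1) • u) P = shift (k • u) P + shift (k • u) (shift u P - P) := by
      rw [← map_add, add_sub_cancel, shift_shift, succ_nsmul]
    rw [hshift, coeff_add, ih β hβ,
      coeff_shift_of_coeff_eq_zero _ fun γ hγ => hstep γ (hβ.trans_lt hγ), succ_nsmul,
      ← add_assoc]
    simp only [coeff_add]

lemma coeff_shift_nsmul_sub {P Q : MvPolynomial σ R} {α : σ →₀ ℕ} {s t : σ → R}
    (hs : ∀ β, α < β → coeff β (shift s P) = coeff β Q)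
    (ht : ∀ β, α < β → coeff β (shift t P) = coeff β Q) (k : ℕ) :
    coeff α (shift (k • (t - s)) P) =
      coeff α P + k * (coeff α (shift t P) - coeff α (shift s P)) := by
  have hst : shift (t - s) (shift s P) = shift t P := by rw [shift_shift, sub_add_cancel]
  have hline := coeff_shift_nsmul (P := shift s P) (u := t - s)
    (fun β hβ => by rw [hst, ht β hβ, hs β hβ]) k
  have hback : shift (k • (t - s)) P = shift (-s) (shift (k • (t - s)) (shift s P)) := by
    rw [shift_shift, shift_shift, add_comm, add_neg_cancel_left]
  have hP : shift (-s) (shift s P) = P := by rw [shift_shift, neg_add_cancel, shift_zero]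
  rw [hback, coeff_shift_eq_of_coeff_eq (-s) hline, hst, map_add, map_nsmul, hP, coeff_add,
    coeff_smul, coeff_shift_of_coeff_eq_zero _ fun γ hγ => by rw [coeff_sub, hs γ hγ, ht γ hγ,
      sub_self], coeff_sub, nsmul_eq_mul]

end Shift

section Homogeneous

variable {σ : Type*}

lemma MvPolynomial.IsHomogeneous.eval_smul {R : Type*} [CommSemiring R] [Fintype σ]
    {φ : MvPolynomial σ R} {m : ℕ} (hφ : φ.IsHomogeneous m) (c : R) (u : σ → R) :
    eval (c • u) φ = c ^ m * eval u φ := by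
  rw [eval_eq', eval_eq', Finset.mul_sum]
  refine Finset.sum_congr rfl fun d hd => ?_
  have hdeg : ∑ i, d i = m := by
    rw [← Finsupp.degree_eq_sum, Finsupp.degree_eq_weight_one]
    exact hφ (mem_support_iff.mp hd)
  simp only [Pi.smul_apply, smul_eq_mul, mul_pow, Finset.prod_mul_distrib,
    Finset.prod_pow_eq_pow_sum, hdeg]
  ring

lemma MvPolynomial.IsHomogeneous.eval_sub {R : Type*} [CommRing R] {φ : MvPolynomial σ R}
    (hφ : φ.IsHomogeneous 1) (a b : σ → R) : eval (a - b) φ = eval a φ - eval b φ := by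
  rw [← mem_homogeneousSubmodule, homogeneousSubmodule_one_eq_span_X] at hφ
  induction hφ using Submodule.span_induction with
  | mem x hx => obtain ⟨i, rfl⟩ := hx; simp
  | zero => simp
  | add x y _ _ hx hy => simp only [map_add, hx, hy]; ring
  | smul c x _ hx => simp only [smul_eval, hx]; ring

lemma eval_homogeneousComponent_one_of_eval_natCast_smul {K : Type*} [Field K] [CharZero K]
    [Fintype σ] {f : MvPolynomial σ K} {u : σ → K} {c₀ c₁ : K}
    (h : ∀ k : ℕ, eval ((k : K) • u) f = c₀ + k * c₁) :
    eval u (homogeneousComponent 1 f) = c₁ := by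
  classical
  -- `Λ(λ) = f(λ • u)`, because `homogeneousComponent i f` is homogeneous of degree `i`.
  set Λ : Polynomial K := ∑ i ∈ Finset.range (f.totalDegree + 1),
    Polynomial.C (eval u (homogeneousComponent i f)) * Polynomial.X ^ i
  have hΛ : Λ = Polynomial.C c₀ + Polynomial.C c₁ * Polynomial.X := by
    refine Polynomial.eq_of_infinite_eval_eq _ _
      ((Set.infinite_range_of_injective Nat.cast_injective).mono ?_)
    rintro _ ⟨k, rfl⟩
    change Polynomial.eval (k : K) Λ = Polynomial.eval (k : K) (.C c₀ + .C c₁ * .X)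
    rw [Polynomial.eval_add, Polynomial.eval_mul, Polynomial.eval_C, Polynomial.eval_C,
      Polynomial.eval_X, mul_comm, ← h k, Polynomial.eval_finsetSum]
    conv_rhs => rw [← sum_homogeneousComponent f, map_sum]
    simp only [Polynomial.eval_mul, Polynomial.eval_C, Polynomial.eval_pow, Polynomial.eval_X]
    exact Finset.sum_congr rfl fun i _ =>
      (mul_comm _ _).trans ((homogeneousComponent_isHomogeneous i f).eval_smul _ _).symm
  have hcoeff := congrArg (Polynomial.coeff · 1) hΛ
  simp only [Λ, Polynomial.finsetSum_coeff, Polynomial.coeff_C_mul_X_pow, Finset.sum_ite_eq,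
    Polynomial.coeff_add, Polynomial.coeff_C_mul_X, Polynomial.coeff_C, one_ne_zero, if_false,
    if_true, zero_add, Finset.mem_range] at hcoeff
  split_ifs at hcoeff with h1
  · exact hcoeff
  · rwa [homogeneousComponent_eq_zero _ _ (by omega), map_zero]

end Homogeneous

section Field

variable {K : Type*} [Field K]

lemma eval_linearize (s t : Fin n → K) (f : MvPolynomial (Fin n) K) :
    eval t (linearize s f) = eval s f + eval (t - s) (homogeneousComponent 1 f) := by
  have hsum : ∑ i ∈ insert 0 (insert 1 (Finset.Icc 2 f.totalDegree)),
      homogeneousComponent i f = f := by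
    conv_rhs => rw [← sum_homogeneousComponent f]
    refine (Finset.sum_subset (fun i hi => ?_) fun i _ hi =>
      homogeneousComponent_eq_zero _ _ ?_).symm
    · simp only [Finset.mem_range, Finset.mem_insert, Finset.mem_Icc] at hi ⊢
      omega
    · simp only [Finset.mem_range] at hi
      omega
  have hs : eval s f = eval s (homogeneousComponent 0 f) + eval s (homogeneousComponent 1 f) +
      ∑ i ∈ Finset.Icc 2 f.totalDegree, eval s (homogeneousComponent i f) := by
    conv_lhs => rw [← hsum]
    rw [map_sum, Finset.sum_insert (by simp), Finset.sum_insert (by simp), add_assoc]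
  rw [linearize, map_add, map_add, eval_C, hs, (homogeneousComponent_isHomogeneous 1 f).eval_sub,
    homogeneousComponent_zero, eval_C, eval_C]
  ring

lemma linearize_of_totalDegree_le_one {f : MvPolynomial (Fin n) K} (hf : f.totalDegree ≤ 1)
    (s : Fin n → K) : linearize s f = f := by
  rw [linearize, Finset.Icc_eq_empty (by omega), Finset.sum_empty, map_zero, add_zero]
  conv_rhs => rw [← sum_homogeneousComponent f,
    Finset.sum_subset (Finset.range_subset_range.mpr (by omega : f.totalDegree + 1 ≤ 2))
      fun i _ hi => homogeneousComponent_eq_zero _ _ (by simpa using hi)]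
  rw [Finset.sum_range_succ, Finset.sum_range_one]

lemma eval_coeff_shiftDiff (p q : MvPolynomial (Fin n) K) (a : Fin n → K) (α : Fin n →₀ ℕ) :
    eval a (coeff α (shiftDiff p q)) = coeff α (shift a p) - coeff α q := by
  have hp : map (eval a) (aeval (fun i => X i + C (X i)) p) = shift a p := by
    induction p using MvPolynomial.induction_on with
    | C c => simp [algebraMap_eq]
    | add p q hp hq => simp [hp, hq]
    | mul_X p i hp => simp [hp]
  have hC : (eval a).comp C = RingHom.id K := RingHom.ext fun c => eval_C c
  rw [← coeff_map, shiftDiff, map_sub, hp, map_map, hC, map_id, coeff_sub]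

lemma eval_linearize_coeff_shiftDiff [CharZero K] {p q : MvPolynomial (Fin n) K}
    {α : Fin n →₀ ℕ} {s t : Fin n → K}
    (hs : ∀ β, α < β → eval s (coeff β (shiftDiff p q)) = 0)
    (ht : ∀ β, α < β → eval t (coeff β (shiftDiff p q)) = 0) :
    eval t (linearize s (coeff α (shiftDiff p q))) = eval t (coeff α (shiftDiff p q)) := by
  simp only [eval_coeff_shiftDiff, sub_eq_zero] at hs ht
  have hline : eval (t - s) (homogeneousComponent 1 (coeff α (shiftDiff p q))) =
      coeff α (shift t p) - coeff α (shift s p) := by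
    refine eval_homogeneousComponent_one_of_eval_natCast_smul
      (c₀ := coeff α p - coeff α q) fun k => ?_
    rw [eval_coeff_shiftDiff, Nat.cast_smul_eq_nsmul, coeff_shift_nsmul_sub hs ht k]
    ring
  rw [eval_linearize, hline, eval_coeff_shiftDiff, eval_coeff_shiftDiff]
  ring

lemma mem_zeroSet_biUnion_range {T : ℕ → Set (MvPolynomial (Fin n) K)}
    {ℓ : ℕ} {s : Fin n → K} :
    s ∈ zeroSet (⋃ i ∈ Finset.range ℓ, T i) ↔ ∀ i < ℓ, ∀ f ∈ T i, eval s f = 0 := by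
  simp only [zeroSet, Set.mem_ofPred_eq, Set.mem_iUnion, Finset.mem_range]
  grind

lemma zeroSet_biUnion_range_antitone {T : ℕ → Set (MvPolynomial (Fin n) K)} :
    Antitone fun ℓ => zeroSet (⋃ i ∈ Finset.range ℓ, T i) :=
  fun _ _ hab _ ht => mem_zeroSet_biUnion_range.mpr fun i hi =>
    mem_zeroSet_biUnion_range.mp ht i (hi.trans_le hab)

end Field

section AdmissibleCover

variable {p q : MvPolynomial (Fin n) F} {m : ℕ} {S : ℕ → Set (MvPolynomial (Fin n) F)}

lemma IsAdmissibleCover.eval_linearize_eq (hS : IsAdmissibleCover p q m S) {ℓ i : ℕ}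
    (hℓ : ℓ ≤ m) (hi : i ≤ ℓ) {s t : Fin n → F} (hs : s ∈ zeroSet (⋃ j ∈ Finset.range ℓ, S j))
    (ht : t ∈ zeroSet (⋃ j ∈ Finset.range ℓ, S j)) {c : MvPolynomial (Fin n) F} (hc : c ∈ S i) :
    eval t (linearize s c) = eval t c := by
  rcases Nat.eq_zero_or_pos i with rfl | hi₀
  · rw [linearize_of_totalDegree_le_one (hS.2.1 c hc)]
  obtain ⟨α, hα, rfl⟩ : c ∈ coeffSet p q :=
    hS.1 ▸ Set.mem_biUnion (Finset.mem_range.mpr (by omega)) hc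
  have hvanish : ∀ u ∈ zeroSet (⋃ j ∈ Finset.range ℓ, S j),
      ∀ β, α < β → eval u (coeff β (shiftDiff p q)) = 0 := by
    intro u hu β hαβ
    by_cases hβ : β ∈ (shiftDiff p q).support
    · obtain ⟨j, hj, hmem⟩ := Set.mem_iUnion₂.mp (hS.2.2 i hi₀ (hi.trans hℓ) α hα hc β hβ hαβ)
      exact mem_zeroSet_biUnion_range.mp hu j ((Finset.mem_range.mp hj).trans_le hi) _ hmem
    · rw [notMem_support_iff.mp hβ, map_zero]
  exact eval_linearize_coeff_shiftDiff (hvanish s hs) (hvanish t ht)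

lemma IsAdmissibleCover.zeroSet_succ_eq_zeroSet_linearize (hS : IsAdmissibleCover p q m S)
    {ℓ : ℕ} (hℓ : ℓ ≤ m) {s : Fin n → F} (hs : s ∈ zeroSet (⋃ i ∈ Finset.range ℓ, S i))
    (hlin : zeroSet (⋃ i ∈ Finset.range ℓ, linearize s '' S i) ⊆
      zeroSet (⋃ i ∈ Finset.range ℓ, S i)) :
    zeroSet (⋃ i ∈ Finset.range (ℓ + 1), S i) =
      zeroSet (⋃ i ∈ Finset.range (ℓ + 1), linearize s '' S i) := by
  ext t
  refine ⟨fun ht => ?_, fun ht => ?_⟩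
  · have htℓ := zeroSet_biUnion_range_antitone ℓ.le_succ ht
    rw [mem_zeroSet_biUnion_range] at ht ⊢
    rintro i hi _ ⟨c, hc, rfl⟩
    rw [hS.eval_linearize_eq hℓ (by omega) hs htℓ hc]
    exact ht i hi c hc
  · have htℓ := hlin (zeroSet_biUnion_range_antitone ℓ.le_succ ht)
    rw [mem_zeroSet_biUnion_range] at ht ⊢
    intro i hi c hc
    rw [← hS.eval_linearize_eq hℓ (by omega) hs htℓ hc]
    exact ht i hi _ ⟨c, hc, rfl⟩

lemma IsAdmissibleCover.zeroSet_eq_zeroSet_linearize (hS : IsAdmissibleCover p q m S) :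
    ∀ ℓ ≤ m, ∀ s ∈ zeroSet (⋃ i ∈ Finset.range ℓ, S i),
      zeroSet (⋃ i ∈ Finset.range (ℓ + 1), S i) =
        zeroSet (⋃ i ∈ Finset.range (ℓ + 1), linearize s '' S i) := by
  intro ℓ
  induction ℓ with
  | zero =>
    refine fun hℓ s hs => hS.zeroSet_succ_eq_zeroSet_linearize hℓ hs fun t _ => ?_
    exact mem_zeroSet_biUnion_range.mpr fun i hi => absurd hi i.not_lt_zero
  | succ ℓ ih =>
    exact fun hℓ s hs => hS.zeroSet_succ_eq_zeroSet_linearize hℓ hs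
      (ih (by omega) s (zeroSet_biUnion_range_antitone ℓ.le_succ hs)).ge

end AdmissibleCover

/-- For an admissible cover `{S 0, …, S m}` of `S_{p,q}`,
for every `ℓ ≤ m` either the zero set of `S 0 ∪ ⋯ ∪ S (ℓ-1)` is empty, or for every point
`s` of that zero set, the zero set of `S 0 ∪ ⋯ ∪ S ℓ` coincides with the zero set of the
linearized system `L_{a=s}(S 0) ∪ ⋯ ∪ L_{a=s}(S ℓ)`. -/
theorem admissibleCover_linearization (p q : MvPolynomial (Fin n) F) (m : ℕ)
    (S : ℕ → Set (MvPolynomial (Fin n) F))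
    (hS : IsAdmissibleCover p q m S) :
    ∀ ℓ ≤ m,
      zeroSet (⋃ i ∈ Finset.range ℓ, S i) = ∅ ∨
      ∀ s ∈ zeroSet (⋃ i ∈ Finset.range ℓ, S i),
        zeroSet (⋃ i ∈ Finset.range (ℓ + 1), S i) =
          zeroSet (⋃ i ∈ Finset.range (ℓ + 1), linearize s '' S i) :=
  fun ℓ hℓ => Or.inr (hS.zeroSet_eq_zeroSet_linearize ℓ hℓ)

end
end

section
/- Let 𝔽 be a field of characteristic zero, p, q ∈ 𝔽[x_1,…,x_n], and let d′ = deg_a(p(x+a) − q(x)). For i = 0, 1, …, d′, set S_i^D = {c_α(a) ∈ S_{p,q} : deg_a(c_α(a)) = i}. Then {S_0^D, S_1^D, …, S_{d′}^D} is an admissible cover of S_{p,q}. -/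
open MvPolynomial

noncomputable section

variable {F : Type*} [Field F] [CharZero F] {n : ℕ}

set_option linter.unusedSectionVars false in
lemma coeff_coeff_aeval_shift (p : MvPolynomial (Fin n) F) (α μ : Fin n →₀ ℕ) :
    coeff μ (coeff α (aeval (fun i => X i + C (X i)) p))
      = ((∏ i, ((α + μ) i).choose (α i) : ℕ) : F) * coeff (α + μ) p := by
  induction p using MvPolynomial.induction_on generalizing α μ with
  | C a =>
      simp only [aeval_C, algebraMap_eq, coeff_C]
      by_cases h : α + μ = 0
      · obtain ⟨hα, hμ⟩ := add_eq_zero.mp h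
        subst hα; subst hμ; simp
      · rw [if_neg (fun hc => h hc.symm)]
        rcases eq_or_ne α 0 with rfl | hα
        · have hμ : μ ≠ 0 := by simpa using h
          simp [algebraMap_eq, coeff_C, Ne.symm hμ]
        · simp [algebraMap_eq, coeff_C, Ne.symm hα]
  | add p q hp hq => simp [map_add, coeff_add, hp, hq, mul_add]
  | mul_X p i hp =>
      classical
      have expand : aeval (fun j => (X j + C (X j) : MvPolynomial (Fin n) (MvPolynomial (Fin n) F))) (p * X i)
          = aeval (fun j => (X j + C (X j) : MvPolynomial (Fin n) (MvPolynomial (Fin n) F))) p * X i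
            + C (X i) * aeval (fun j => (X j + C (X j) : MvPolynomial (Fin n) (MvPolynomial (Fin n) F))) p := by
        simp [mul_add]; ring
      set Q := aeval (fun j => (X j + C (X j) : MvPolynomial (Fin n) (MvPolynomial (Fin n) F))) p with hQ
      rw [expand, coeff_add, coeff_add, coeff_mul_X', coeff_C_mul, coeff_X_mul',
        apply_ite (coeff μ), coeff_zero, coeff_mul_X']
      simp only [hp]
      have hsub : ∀ (ν : Fin n →₀ ℕ) (j : Fin n), j ≠ i →
          (ν - Finsupp.single i 1 : Fin n →₀ ℕ) j = ν j := by
        intro ν j hj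
        simp [Finsupp.tsub_apply, Finsupp.single_apply, Ne.symm hj]
      have hsubi : ∀ (ν : Fin n →₀ ℕ), (ν - Finsupp.single i 1 : Fin n →₀ ℕ) i = ν i - 1 := by
        intro ν; simp [Finsupp.tsub_apply]
      have hprodsplit : ∀ g : Fin n → ℕ, (∏ j, g j)
          = g i * ∏ j ∈ Finset.univ.erase i, g j :=
        fun g => (Finset.mul_prod_erase _ _ (Finset.mem_univ i)).symm
      by_cases hα : α i = 0 <;> by_cases hμ : μ i = 0
      · have h1 : i ∉ α.support := by simp [hα]
        have h2 : i ∉ μ.support := by simp [hμ]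
        have h3 : i ∉ (α + μ).support := by simp [hα, hμ]
        simp [h1, h2, h3]
      · -- α i = 0, μ i ≠ 0
        have h1 : i ∉ α.support := by simp [hα]
        have h2 : i ∈ μ.support := by simp [hμ]
        have h3 : i ∈ (α + μ).support := by simp [hμ]
        have hexp : α + (μ - Finsupp.single i 1) = α + μ - Finsupp.single i 1 :=
          (add_tsub_assoc_of_le (Finsupp.single_le_iff.mpr (Nat.one_le_iff_ne_zero.mpr hμ)) α).symm
        have hB : (∏ j, ((α + μ - Finsupp.single i 1 : Fin n →₀ ℕ) j).choose (α j))
            = ∏ j, ((α + μ) j).choose (α j) := by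
          refine Finset.prod_congr rfl fun j _ => ?_
          rcases eq_or_ne j i with rfl | hj
          · simp [hα]
          · rw [hsub _ j hj]
        rw [if_neg h1, if_pos h2, if_pos h3, hexp, hB, zero_add]
      · -- α i ≠ 0, μ i = 0
        have h1 : i ∈ α.support := by simp [hα]
        have h2 : i ∉ μ.support := by simp [hμ]
        have h3 : i ∈ (α + μ).support := by simp [hα]
        have hle : Finsupp.single i 1 ≤ α :=
          Finsupp.single_le_iff.mpr (Nat.one_le_iff_ne_zero.mpr hα)
        have hexp : α - Finsupp.single i 1 + μ = α + μ - Finsupp.single i 1 :=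
          tsub_add_eq_add_tsub hle
        have hB : (∏ j, ((α + μ - Finsupp.single i 1 : Fin n →₀ ℕ) j).choose ((α - Finsupp.single i 1 : Fin n →₀ ℕ) j))
            = ∏ j, ((α + μ) j).choose (α j) := by
          refine Finset.prod_congr rfl fun j _ => ?_
          rcases eq_or_ne j i with rfl | hj
          · rw [hsubi, hsubi, Finsupp.add_apply, hμ, add_zero, Nat.choose_self, Nat.choose_self]
          · rw [hsub _ j hj, hsub _ j hj]
        rw [if_pos h1, if_neg h2, if_pos h3, hexp, hB, add_zero]
      · -- both nonzero
        have h1 : i ∈ α.support := by simp [hα]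
        have h2 : i ∈ μ.support := by simp [hμ]
        have h3 : i ∈ (α + μ).support := by simp [hα]
        have hleα : Finsupp.single i 1 ≤ α :=
          Finsupp.single_le_iff.mpr (Nat.one_le_iff_ne_zero.mpr hα)
        have hleμ : Finsupp.single i 1 ≤ μ :=
          Finsupp.single_le_iff.mpr (Nat.one_le_iff_ne_zero.mpr hμ)
        have hexp1 : α - Finsupp.single i 1 + μ = α + μ - Finsupp.single i 1 :=
          tsub_add_eq_add_tsub hleα
        have hexp2 : α + (μ - Finsupp.single i 1) = α + μ - Finsupp.single i 1 :=
          (add_tsub_assoc_of_le hleμ α).symm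
        rw [if_pos h1, if_pos h2, if_pos h3, hexp1, hexp2, ← add_mul]
        congr 1
        rw [← Nat.cast_add]
        congr 1
        -- Pascal's identity at coordinate i
        obtain ⟨k, hk⟩ := Nat.exists_eq_succ_of_ne_zero hα
        obtain ⟨m, hm⟩ := Nat.exists_eq_succ_of_ne_zero hμ
        rw [hprodsplit (fun j => ((α + μ - Finsupp.single i 1 : Fin n →₀ ℕ) j).choose ((α - Finsupp.single i 1 : Fin n →₀ ℕ) j)),
          hprodsplit (fun j => ((α + μ - Finsupp.single i 1 : Fin n →₀ ℕ) j).choose (α j)),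
          hprodsplit (fun j => ((α + μ) j).choose (α j))]
        have hrest1 : (∏ j ∈ Finset.univ.erase i,
            ((α + μ - Finsupp.single i 1 : Fin n →₀ ℕ) j).choose ((α - Finsupp.single i 1 : Fin n →₀ ℕ) j))
            = ∏ j ∈ Finset.univ.erase i, ((α + μ) j).choose (α j) := by
          refine Finset.prod_congr rfl fun j hj => ?_
          have hj' : j ≠ i := Finset.ne_of_mem_erase hj
          rw [hsub _ j hj', hsub _ j hj']
        have hrest2 : (∏ j ∈ Finset.univ.erase i,
            ((α + μ - Finsupp.single i 1 : Fin n →₀ ℕ) j).choose (α j))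
            = ∏ j ∈ Finset.univ.erase i, ((α + μ) j).choose (α j) := by
          refine Finset.prod_congr rfl fun j hj => ?_
          rw [hsub _ j (Finset.ne_of_mem_erase hj)]
        rw [hrest1, hrest2, ← add_mul]
        congr 1
        rw [hsubi, hsubi, Finsupp.add_apply, hk, hm]
        have e1 : k.succ + m.succ - 1 = (k + m + 1) := by omega
        have e2 : k.succ + m.succ = (k + m + 1) + 1 := by omega
        rw [e1, e2, Nat.succ_sub_one]
        exact (Nat.choose_succ_succ (k + m + 1) k).symm

lemma coeff_coeff_shiftDiff (p q : MvPolynomial (Fin n) F) (α μ : Fin n →₀ ℕ)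
    (hμ : μ ≠ 0) :
    coeff μ (coeff α (shiftDiff p q))
      = ((∏ i, ((α + μ) i).choose (α i) : ℕ) : F) * coeff (α + μ) p := by
  rw [shiftDiff, coeff_sub, MvPolynomial.coeff_map, coeff_sub,
    coeff_coeff_aeval_shift]
  have : coeff μ (C (coeff α q) : MvPolynomial (Fin n) F) = 0 := by
    rw [coeff_C, if_neg (fun h => hμ h.symm)]
  rw [this, sub_zero]

/-- degree of a Finsupp exponent -/
lemma deg_add (a b : Fin n →₀ ℕ) :
    ((a + b).sum fun _ e => e) = (a.sum fun _ e => e) + b.sum fun _ e => e :=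
  Finsupp.sum_add_index' (fun _ => rfl) (fun _ _ _ => rfl)

lemma deg_pos (a : Fin n →₀ ℕ) (ha : a ≠ 0) : 1 ≤ a.sum fun _ e => e := by
  obtain ⟨j, hj⟩ := Finsupp.ne_iff.mp ha
  simp only [Finsupp.coe_zero, Pi.zero_apply] at hj
  calc 1 ≤ a j := Nat.one_le_iff_ne_zero.mpr hj
    _ ≤ a.sum fun _ e => e := by
        rw [Finsupp.sum]
        exact Finset.single_le_sum (fun _ _ => Nat.zero_le _)
          (Finsupp.mem_support_iff.mpr hj)

lemma key_deg_lt (p q : MvPolynomial (Fin n) F) (α β : Fin n →₀ ℕ)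
    (hαβ : α < β) (hℓ : 1 ≤ (coeff α (shiftDiff p q)).totalDegree) :
    (coeff β (shiftDiff p q)).totalDegree < (coeff α (shiftDiff p q)).totalDegree := by
  set ℓ := (coeff α (shiftDiff p q)).totalDegree with hℓdef
  have hβα : β - α ≠ 0 := by
    intro h
    exact absurd (tsub_eq_zero_iff_le.mp h) (not_le_of_gt hαβ)
  have hle : α ≤ β := le_of_lt hαβ
  have hbound : (coeff β (shiftDiff p q)).totalDegree ≤ ℓ - 1 := by
    rw [totalDegree]
    apply Finset.sup_le
    intro ν hν
    rcases eq_or_ne ν 0 with rfl | hν0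
    · simp
    · -- coeff ν (coeff β D) ≠ 0, so coeff (β+ν) p ≠ 0
      have hc : coeff ν (coeff β (shiftDiff p q)) ≠ 0 := MvPolynomial.mem_support_iff.mp hν
      rw [coeff_coeff_shiftDiff p q β ν hν0] at hc
      have hpβν : coeff (β + ν) p ≠ 0 := fun h => hc (by rw [h, mul_zero])
      -- consider μ' = (β - α) + ν
      set μ' : Fin n →₀ ℕ := β - α + ν with hμ'def
      have hμ'0 : μ' ≠ 0 := by
        intro h
        exact hβα (add_eq_zero.mp h).1
      have hαμ' : α + μ' = β + ν := by
        rw [hμ'def, ← add_assoc, add_tsub_cancel_of_le hle]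
      have hcoef : coeff μ' (coeff α (shiftDiff p q)) ≠ 0 := by
        rw [coeff_coeff_shiftDiff p q α μ' hμ'0, hαμ']
        apply mul_ne_zero _ hpβν
        rw [Nat.cast_ne_zero]
        apply Finset.prod_ne_zero_iff.mpr
        intro j _
        have hj : α j ≤ (β + ν) j :=
          le_trans (Finsupp.le_def.mp hle j) (by simp)
        exact (Nat.choose_pos hj).ne'
      have hμ'mem : μ' ∈ (coeff α (shiftDiff p q)).support :=
        MvPolynomial.mem_support_iff.mpr hcoef
      have hμ'deg : (μ'.sum fun _ e => e) ≤ ℓ := le_totalDegree hμ'mem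
      have hsplit : (μ'.sum fun _ e => e)
          = ((β - α).sum fun _ e => e) + ν.sum fun _ e => e := deg_add _ _
      have h1 : 1 ≤ (β - α).sum fun _ e => e := deg_pos _ hβα
      omega
  omega

/-- With `d' = deg_a (p(x+a) - q(x))`, the sets
`S_i^D = {c ∈ S_{p,q} : deg_a c = i}` for `i = 0, …, d'` form an admissible cover of `S_{p,q}`. -/
theorem aDegreeCover_isAdmissible (p q : MvPolynomial (Fin n) F)
    (d' : ℕ) (hd' : d' = (shiftDiff p q).support.sup
      (fun α => (coeff α (shiftDiff p q)).totalDegree)) :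
    IsAdmissibleCover p q d' (fun i => {c | c ∈ coeffSet p q ∧ c.totalDegree = i}) := by
  refine ⟨?_, ?_, ?_⟩
  · ext c
    simp only [Set.mem_iUnion, Set.mem_setOf_eq, Finset.mem_range]
    constructor
    · rintro ⟨i, _, hc, _⟩
      exact hc
    · intro hc
      refine ⟨c.totalDegree, ?_, hc, rfl⟩
      obtain ⟨α, hα, rfl⟩ := hc
      have : (coeff α (shiftDiff p q)).totalDegree ≤ d' := by
        rw [hd']
        exact Finset.le_sup (f := fun γ => (coeff γ (shiftDiff p q)).totalDegree) hα
      omega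
  · rintro c ⟨_, hc⟩
    omega
  · intro ℓ hℓ1 _ α hα hmem β hβ hlt
    obtain ⟨_, hdeg⟩ := hmem
    have hlt' : (coeff β (shiftDiff p q)).totalDegree < ℓ := by
      rw [← hdeg]
      exact key_deg_lt p q α β hlt (by omega)
    simp only [Set.mem_iUnion, Set.mem_setOf_eq, Finset.mem_range]
    exact ⟨(coeff β (shiftDiff p q)).totalDegree, hlt', ⟨β, hβ, rfl⟩, rfl⟩

end
end

section
/- Let 𝔽 be a field of characteristic zero, f ∈ 𝔽[x_1,…,x_n], a ∈ 𝔽^n, α ∈ ℕ^n, and k, ℓ ∈ ℕ^+. Let e_i ∈ ℕ^n denote the i-th unit vector. Then: (1) D_{a,α}^k(f) = Σ_{j_1=1}^n ⋯ Σ_{j_k=1}^n a^{e_{j_1}+⋯+e_{j_k}} ∂^{e_{j_1}+⋯+e_{j_k}}( [x^{α+e_{j_1}+⋯+e_{j_k}}](f) · x^{α+e_{j_1}+⋯+e_{j_k}} ); and (2) D_{a,α}^{k+ℓ}(f) = Σ_{|β|=ℓ} (ℓ choose β) a^β ∂^β( D_{a,α+β}^k(f) ). -/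
/-!
Expanding `(∑ i, a i X i) ^ k` once as a sum over index tuples `j : Fin k → Fin n` and once by
the multinomial theorem, then applying the linear map `x^d ↦ G d`, shows that summing over
tuples is the same as summing over their multiplicity vectors `β` with weight
`(k choose β) a^β`; this is (1). For (2), expand both sides into tuple sums: a `(k + ℓ)`-tuple
is a `k`-tuple followed by an `ℓ`-tuple, and `∂^(β + γ) = ∂^β ∂^γ` because partial derivatives
commute.
-/

open MvPolynomial

noncomputable section

variable {F : Type*} [Field F] [CharZero F] {n : ℕ}

/-- `∂^β = ∂_{x_1}^{β_1} ⋯ ∂_{x_n}^{β_n}` as an `F`-linear endomorphism of `F[x]`. -/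
def pdPow (β : Fin n →₀ ℕ) : Module.End F (MvPolynomial (Fin n) F) :=
  (((List.finRange n).map fun i =>
    (((pderiv i).toLinearMap : Module.End F (MvPolynomial (Fin n) F)) ^ (β i)))).prod

/-- `D_{a,α}^k(f) = ∑_{|β|=k} (k choose β) a^β ∂^β ([x^{α+β}](f) · x^{α+β})`. -/
def Dk (a : Fin n → F) (α : Fin n →₀ ℕ) (k : ℕ) (f : MvPolynomial (Fin n) F) :
    MvPolynomial (Fin n) F :=
  ∑ β ∈ Finset.Nat.antidiagonalTuple n k,
    ((Nat.multinomial Finset.univ β : F) * ∏ i, a i ^ β i) •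
      pdPow (Finsupp.equivFunOnFinite.symm β)
        (monomial (α + Finsupp.equivFunOnFinite.symm β)
          (coeff (α + Finsupp.equivFunOnFinite.symm β) f))

section Multinomial

variable {R : Type*} [CommSemiring R]

theorem sum_C_mul_X_pow_eq_sum_tuple (a : Fin n → R) (k : ℕ) :
    (∑ i, C (a i) * X i : MvPolynomial (Fin n) R) ^ k =
      ∑ j : Fin k → Fin n, monomial (∑ i, Finsupp.single (j i) 1) (∏ i, a (j i)) := by
  simp_rw [Finset.sum_pow', Fintype.piFinset_univ, C_mul_X_eq_monomial, monomial_sum_prod]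

theorem sum_C_mul_X_pow_eq_sum_antidiagonalTuple (a : Fin n → R) (k : ℕ) :
    (∑ i, C (a i) * X i : MvPolynomial (Fin n) R) ^ k =
      ∑ β ∈ Finset.Nat.antidiagonalTuple n k,
        monomial (Finsupp.equivFunOnFinite.symm β)
          ((Nat.multinomial Finset.univ β : R) * ∏ i, a i ^ β i) := by
  rw [Finset.sum_pow_eq_sum_piAntidiag, Finset.piAntidiag_univ_fin_eq_antidiagonalTuple]
  refine Finset.sum_congr rfl fun β _ => ?_
  simp_rw [mul_pow, ← C_pow, C_mul_X_pow_eq_monomial, ← monomial_sum_prod,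
    ← Finsupp.equivFunOnFinite_symm_eq_sum, ← C_eq_coe_nat, C_mul_monomial]

theorem sum_tuple_smul_eq_sum_antidiagonalTuple {M : Type*} [AddCommMonoid M] [Module R M]
    (a : Fin n → R) (k : ℕ) (G : (Fin n →₀ ℕ) → M) :
    ∑ j : Fin k → Fin n, (∏ i, a (j i)) • G (∑ i, Finsupp.single (j i) 1) =
      ∑ β ∈ Finset.Nat.antidiagonalTuple n k,
        ((Nat.multinomial Finset.univ β : R) * ∏ i, a i ^ β i) •
          G (Finsupp.equivFunOnFinite.symm β) := by
  let φ := (basisMonomials (Fin n) R).constr ℕ G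
  have hφ (d : Fin n →₀ ℕ) (c : R) : φ (monomial d c) = c • G d := by
    have hd : monomial d c = c • basisMonomials (Fin n) R d := by
      rw [coe_basisMonomials, smul_monomial, smul_eq_mul, mul_one]
    rw [hd, map_smul, Module.Basis.constr_basis]
  simpa only [map_sum, hφ] using congrArg φ
    ((sum_C_mul_X_pow_eq_sum_tuple a k).symm.trans (sum_C_mul_X_pow_eq_sum_antidiagonalTuple a k))

theorem sum_fin_add_tuple_smul {M : Type*} [AddCommMonoid M] [Module R M]
    (a : Fin n → R) (k ℓ : ℕ) (G : (Fin n →₀ ℕ) → M) :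
    ∑ j : Fin (k + ℓ) → Fin n, (∏ i, a (j i)) • G (∑ i, Finsupp.single (j i) 1) =
      ∑ j : Fin k → Fin n, ∑ j' : Fin ℓ → Fin n, ((∏ i, a (j i)) * ∏ i, a (j' i)) •
        G ((∑ i, Finsupp.single (j i) 1) + ∑ i, Finsupp.single (j' i) 1) := by
  rw [← Fintype.sum_prod_type', ← (Fin.appendEquiv k ℓ).sum_comp]
  simp [Fin.prod_univ_add, Fin.sum_univ_add]

end Multinomial

theorem MvPolynomial.commute_pderiv {R σ : Type*} [CommRing R] (i j : σ) :
    Commute ((pderiv i).toLinearMap : Module.End R (MvPolynomial σ R)) (pderiv j).toLinearMap := by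
  classical
  have h : ⁅pderiv i, pderiv j⁆ = (0 : Derivation R (MvPolynomial σ R) (MvPolynomial σ R)) :=
    derivation_ext fun m => by
      rw [Derivation.commutator_apply]
      simp only [pderiv_X, Pi.single_apply]
      split_ifs <;> simp
  rw [commute_iff_lie_eq, ← Derivation.commutator_coe_linear_map, h]
  rfl

theorem List.prod_map_mul_of_commute {ι M : Type*} [Monoid M] {f g : ι → M}
    (h : ∀ i j, Commute (g i) (f j)) (l : List ι) :
    (l.map fun i => f i * g i).prod = (l.map f).prod * (l.map g).prod := by
  induction l with
  | nil => simp
  | cons i l ih =>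
    have hc : Commute (g i) (l.map f).prod := Commute.list_prod_right _ _ fun x hx => by
      obtain ⟨j, -, rfl⟩ := List.mem_map.1 hx
      exact h i j
    simp only [List.map_cons, List.prod_cons, ih]
    rw [mul_assoc, ← mul_assoc (g i), hc.eq, mul_assoc, mul_assoc]

theorem pdPow_add {K : Type*} [Field K] (β γ : Fin n →₀ ℕ) :
    (pdPow (β + γ) : Module.End K (MvPolynomial (Fin n) K)) = pdPow β * pdPow γ := by
  simp only [pdPow, Finsupp.add_apply, pow_add]
  exact List.prod_map_mul_of_commute (fun i j => (commute_pderiv i j).pow_pow _ _) _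

theorem Dk_eq_sum_tuple {K : Type*} [Field K] (f : MvPolynomial (Fin n) K) (a : Fin n → K)
    (α : Fin n →₀ ℕ) (k : ℕ) :
    Dk a α k f =
      ∑ j : Fin k → Fin n,
        (∏ i, a (j i)) •
          pdPow (∑ i, Finsupp.single (j i) 1)
            (monomial (α + ∑ i, Finsupp.single (j i) 1)
              (coeff (α + ∑ i, Finsupp.single (j i) 1) f)) :=
  (sum_tuple_smul_eq_sum_antidiagonalTuple a k fun β =>
    pdPow β (monomial (α + β) (coeff (α + β) f))).symm

theorem Dk_unitVector_sum_and_rec_general (f : MvPolynomial (Fin n) F) (a : Fin n → F)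
    (α : Fin n →₀ ℕ) (k ℓ : ℕ) :
    (Dk a α k f =
      ∑ j : Fin k → Fin n,
        (∏ i, a (j i)) •
          pdPow (∑ i, Finsupp.single (j i) 1)
            (monomial (α + ∑ i, Finsupp.single (j i) 1)
              (coeff (α + ∑ i, Finsupp.single (j i) 1) f))) ∧
    (Dk a α (k + ℓ) f =
      ∑ β ∈ Finset.Nat.antidiagonalTuple n ℓ,
        ((Nat.multinomial Finset.univ β : F) * ∏ i, a i ^ β i) •
          pdPow (Finsupp.equivFunOnFinite.symm β)
            (Dk a (α + Finsupp.equivFunOnFinite.symm β) k f)) := by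
  refine ⟨Dk_eq_sum_tuple f a α k, ?_⟩
  rw [← sum_tuple_smul_eq_sum_antidiagonalTuple a ℓ fun β => pdPow β (Dk a (α + β) k f),
    Dk_eq_sum_tuple,
    sum_fin_add_tuple_smul a k ℓ fun β => pdPow β (monomial (α + β) (coeff (α + β) f)),
    Finset.sum_comm]
  refine Fintype.sum_congr _ _ fun j' => ?_
  rw [Dk_eq_sum_tuple, map_sum, Finset.smul_sum]
  refine Fintype.sum_congr _ _ fun j => ?_
  rw [map_smul, smul_smul, ← Module.End.mul_apply, ← pdPow_add, mul_comm,
    add_comm (∑ i, Finsupp.single (j i) 1), add_assoc]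

/-- (1) `D_{a,α}^k(f)` is the `k`-fold sum over unit vectors
`e_{j_1}, …, e_{j_k}`; (2) the recurrence
`D_{a,α}^{k+ℓ}(f) = ∑_{|β|=ℓ} (ℓ choose β) a^β ∂^β (D_{a,α+β}^k(f))`. -/
theorem Dk_unitVector_sum_and_rec (f : MvPolynomial (Fin n) F) (a : Fin n → F)
    (α : Fin n →₀ ℕ) (k ℓ : ℕ) (hk : 1 ≤ k) (hℓ : 1 ≤ ℓ) :
    (Dk a α k f =
      ∑ j : Fin k → Fin n,
        (∏ i, a (j i)) •
          pdPow (∑ i, Finsupp.single (j i) 1)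
            (monomial (α + ∑ i, Finsupp.single (j i) 1)
              (coeff (α + ∑ i, Finsupp.single (j i) 1) f))) ∧
    (Dk a α (k + ℓ) f =
      ∑ β ∈ Finset.Nat.antidiagonalTuple n ℓ,
        ((Nat.multinomial Finset.univ β : F) * ∏ i, a i ^ β i) •
          pdPow (Finsupp.equivFunOnFinite.symm β)
            (Dk a (α + Finsupp.equivFunOnFinite.symm β) k f)) :=
  Dk_unitVector_sum_and_rec_general f a α k ℓ

end
end

section
/- Let 𝔽 be a field of characteristic zero, f ∈ 𝔽[x_1,…,x_n], a, b ∈ 𝔽^n, α ∈ ℕ^n and k ∈ ℕ^+. If D^1_{a,β}(f) = D^1_{b,β}(f) for all β ∈ ℕ^n with β ≥ α and |β| = |α| + k − 1, then D^k_{a,α}(f) = D^k_{b,α}(f). -/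
open MvPolynomial

noncomputable section

variable {F : Type*} [Field F] [CharZero F] {n : ℕ}

/-! `D^k_{a,α}(f)` is the `x^α`-term of `(a·∇)^k f`, where `a·∇ = ∑ aᵢ ∂ᵢ`: expanding `(a·∇)^k`
by the multinomial theorem (the `∂ᵢ` commute) gives exactly the sum defining `D^k_{a,α}`.
Since `a·∇` and `b·∇` commute, `(a·∇)^k - (b·∇)^k = ∑ⱼ (a·∇)^j (b·∇)^(k-1-j) ∘ (a·∇ - b·∇)`,
and the `x^α`-coefficient of a product of `k - 1` first-order operators applied to `g` only sees
the coefficients of `g` at exponents `γ ≥ α` with `|γ| = |α| + k - 1`. For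
`g = (a·∇)f - (b·∇)f` these are the coefficients compared by the hypotheses
`D^1_{a,γ}(f) = D^1_{b,γ}(f)`, so they vanish. -/

theorem List.prod_map_smul {ι R A : Type*} [CommMonoid R] [Monoid A] [MulAction R A]
    [IsScalarTower R A A] [SMulCommClass R A A] (l : List ι) (c : ι → R) (x : ι → A) :
    (l.map fun i => c i • x i).prod = (l.map c).prod • (l.map x).prod := by
  induction l with
  | nil => simp
  | cons i l ih => simp [ih, smul_mul_smul_comm]

namespace MvPolynomial

section CommSemiring

variable {σ R : Type*} [CommSemiring R]

theorem pderiv_pderiv_comm (i j : σ) (p : MvPolynomial σ R) :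
    pderiv i (pderiv j p) = pderiv j (pderiv i p) := by
  obtain rfl | hij := eq_or_ne i j
  · rfl
  ext m
  simp only [coeff_pderiv, Finsupp.add_apply, Finsupp.single_eq_of_ne hij,
    Finsupp.single_eq_of_ne hij.symm, add_zero, add_right_comm m]
  ring

theorem commute_pderiv_s5 (i j : σ) :
    Commute ((pderiv i).toLinearMap : Module.End R (MvPolynomial σ R)) (pderiv j).toLinearMap :=
  LinearMap.ext (pderiv_pderiv_comm i j)

theorem pderiv_pow_monomial (i : σ) (r : ℕ) (γ : σ →₀ ℕ) (c : R) :
    ((pderiv i).toLinearMap ^ r : Module.End R (MvPolynomial σ R)) (monomial γ c) =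
      monomial (γ - Finsupp.single i r) ((γ i).descFactorial r * c) := by
  induction r with
  | zero => simp
  | succ r ih =>
    rw [pow_succ', Module.End.mul_apply, ih, Derivation.coeFn_coe, pderiv_monomial,
      tsub_tsub, ← Finsupp.single_add, Finsupp.tsub_apply, Finsupp.single_eq_same,
      Nat.descFactorial_succ]
    push_cast
    ring_nf

theorem list_prod_pderiv_pow_monomial (β : σ → ℕ) {l : List σ} (hl : l.Nodup)
    (γ : σ →₀ ℕ) (c : R) :
    (l.map fun i => ((pderiv i).toLinearMap ^ β i : Module.End R (MvPolynomial σ R))).prod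
        (monomial γ c) =
      monomial (γ - (l.map fun i => Finsupp.single i (β i)).sum)
        ((l.map fun i => (γ i).descFactorial (β i)).prod * c) := by
  induction l with
  | nil => simp
  | cons i l ih =>
    obtain ⟨hi, hl⟩ := List.nodup_cons.mp hl
    have hγi : (γ - (l.map fun j => Finsupp.single j (β j)).sum) i = γ i := by
      rw [Finsupp.tsub_apply, ← Finsupp.applyAddHom_apply i (List.sum _), map_list_sum,
        List.sum_eq_zero, Nat.sub_zero]
      simp only [List.map_map, List.mem_map]
      rintro _ ⟨j, hj, rfl⟩
      exact Finsupp.single_eq_of_ne (ne_of_mem_of_not_mem hj hi).symm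
    simp only [List.map_cons, List.prod_cons, List.sum_cons, Module.End.mul_apply, ih hl,
      pderiv_pow_monomial, hγi, tsub_tsub, add_comm (Finsupp.single i (β i))]
    push_cast
    ring_nf

def VanishesOnLayer (α : σ →₀ ℕ) (m : ℕ) (g : MvPolynomial σ R) : Prop :=
  ∀ γ, α ≤ γ → γ.degree = α.degree + m → coeff γ g = 0

theorem VanishesOnLayer.coeff_eq_zero {α : σ →₀ ℕ} {g : MvPolynomial σ R}
    (hg : VanishesOnLayer α 0 g) : coeff α g = 0 :=
  hg α le_rfl rfl

variable [Fintype σ]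

def dirDeriv (a : σ → R) : Module.End R (MvPolynomial σ R) :=
  ∑ i, a i • (pderiv i).toLinearMap

theorem commute_dirDeriv (a b : σ → R) : Commute (dirDeriv a) (dirDeriv b) :=
  .sum_left _ _ _ fun i _ => .sum_right _ _ _ fun j _ =>
    ((commute_pderiv_s5 i j).smul_left (a i)).smul_right (b j)

theorem coeff_dirDeriv (a : σ → R) (m : σ →₀ ℕ) (p : MvPolynomial σ R) :
    coeff m (dirDeriv a p) = ∑ i, a i * (coeff (m + Finsupp.single i 1) p * (m i + 1)) := by
  simp [dirDeriv, coeff_sum, coeff_pderiv]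

theorem VanishesOnLayer.dirDeriv {α : σ →₀ ℕ} {m : ℕ} {g : MvPolynomial σ R}
    (hg : VanishesOnLayer α (m + 1) g) (a : σ → R) :
    VanishesOnLayer α m (MvPolynomial.dirDeriv a g) := by
  intro γ hαγ hγ
  rw [coeff_dirDeriv]
  refine Finset.sum_eq_zero fun i _ => ?_
  rw [hg _ (hαγ.trans le_self_add) (by simp [hγ, add_assoc]), zero_mul, mul_zero]

theorem VanishesOnLayer.dirDeriv_pow {α : σ →₀ ℕ} {m j : ℕ} {g : MvPolynomial σ R}
    (hg : VanishesOnLayer α (m + j) g) (a : σ → R) :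
    VanishesOnLayer α m ((MvPolynomial.dirDeriv a ^ j) g) := by
  induction j generalizing m with
  | zero => simpa using hg
  | succ j ih =>
    rw [pow_succ', Module.End.mul_apply]
    exact (ih (by rwa [add_right_comm, add_assoc])).dirDeriv a

end CommSemiring

theorem coeff_dirDeriv_pow_sub_pow_eq_zero {σ R : Type*} [CommRing R] [Fintype σ]
    {α : σ →₀ ℕ} {m : ℕ} {a b : σ → R} {f : MvPolynomial σ R}
    (hf : VanishesOnLayer α m (dirDeriv a f - dirDeriv b f)) :
    coeff α ((dirDeriv a ^ (m + 1) - dirDeriv b ^ (m + 1)) f) = 0 := by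
  rw [← (commute_dirDeriv a b).geom_sum₂_mul, Module.End.mul_apply, LinearMap.sub_apply,
    LinearMap.sum_apply, coeff_sum]
  refine Finset.sum_eq_zero fun j hj => ?_
  have hjm : VanishesOnLayer α (0 + j + (m + 1 - 1 - j))
      (dirDeriv a f - dirDeriv b f) := by
    rwa [zero_add, Nat.add_sub_cancel, Nat.add_sub_cancel' (Finset.mem_range_succ_iff.mp hj)]
  exact ((hjm.dirDeriv_pow b).dirDeriv_pow a).coeff_eq_zero

end MvPolynomial

section

variable {K : Type*} [Field K]

theorem pdPow_monomial (β γ : Fin n →₀ ℕ) (c : K) :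
    pdPow β (monomial γ c) = monomial (γ - β) ((∏ i, (γ i).descFactorial (β i) : ℕ) * c) := by
  rw [pdPow, list_prod_pderiv_pow_monomial _ (List.nodup_finRange n), ← Fin.sum_univ_def,
    Finsupp.univ_sum_single, ← Fin.prod_univ_def]

theorem coeff_pdPow (β α : Fin n →₀ ℕ) (f : MvPolynomial (Fin n) K) :
    coeff α (pdPow β f) = (∏ i, ((α + β) i).descFactorial (β i) : ℕ) * coeff (α + β) f := by
  induction f using MvPolynomial.induction_on' with
  | add p q hp hq => simp only [map_add, coeff_add, hp, hq, mul_add]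
  | monomial γ c =>
    rw [pdPow_monomial, coeff_monomial, coeff_monomial]
    by_cases hβγ : β ≤ γ
    · simp only [tsub_eq_iff_eq_add_of_le hβγ]
      split_ifs with h <;> simp [h]
    · obtain ⟨i, hi⟩ : ∃ i, γ i < β i := by simpa [Finsupp.le_def] using hβγ
      have hαβ : γ ≠ α + β := by rintro rfl; exact hβγ le_add_self
      rw [Finset.prod_eq_zero (Finset.mem_univ i) (Nat.descFactorial_eq_zero_iff_lt.mpr hi),
        if_neg hαβ]
      simp

theorem pdPow_monomial_coeff_add (β α : Fin n →₀ ℕ) (f : MvPolynomial (Fin n) K) :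
    pdPow β (monomial (α + β) (coeff (α + β) f)) = monomial α (coeff α (pdPow β f)) := by
  rw [pdPow_monomial, add_tsub_cancel_right, coeff_pdPow]

theorem dirDeriv_pow (a : Fin n → K) (k : ℕ) :
    dirDeriv a ^ k = ∑ β ∈ Finset.Nat.antidiagonalTuple n k,
      ((Nat.multinomial Finset.univ β : K) * ∏ i, a i ^ β i) •
        pdPow (Finsupp.equivFunOnFinite.symm β) := by
  have hc : ((Finset.univ : Finset (Fin n)) : Set (Fin n)).Pairwise
      (Function.onFun Commute fun i =>
        a i • ((pderiv i).toLinearMap : Module.End K (MvPolynomial (Fin n) K))) :=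
    fun i _ j _ _ => ((commute_pderiv_s5 i j).smul_left _).smul_right _
  rw [dirDeriv, Finset.sum_pow_eq_sum_piAntidiag_of_commute _ _ hc,
    Finset.piAntidiag_univ_fin_eq_antidiagonalTuple]
  refine Finset.sum_congr rfl fun β _ => ?_
  simp only [Finset.noncommProd, Fin.univ_val_map, Multiset.noncommProd_coe, List.ofFn_eq_map,
    smul_pow, List.prod_map_smul, ← Fin.prod_univ_def]
  rw [← nsmul_eq_mul, ← Nat.cast_smul_eq_nsmul K, smul_smul]
  rfl

theorem Dk_eq_monomial_coeff_dirDeriv_pow (a : Fin n → K) (α : Fin n →₀ ℕ) (k : ℕ)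
    (f : MvPolynomial (Fin n) K) :
    Dk a α k f = monomial α (coeff α ((dirDeriv a ^ k) f)) := by
  simp only [Dk, pdPow_monomial_coeff_add, dirDeriv_pow, LinearMap.sum_apply,
    LinearMap.smul_apply, coeff_sum, coeff_smul, map_sum, smul_monomial]

end

theorem Dk_eq_of_D1_eq_general (f : MvPolynomial (Fin n) F) (a b : Fin n → F)
    (α : Fin n →₀ ℕ) (k : ℕ)
    (h : ∀ β : Fin n →₀ ℕ, α ≤ β →
        (β.sum fun _ e => e) + 1 = (α.sum fun _ e => e) + k →
        Dk a β 1 f = Dk b β 1 f) :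
    Dk a α k f = Dk b α k f := by
  rw [Dk_eq_monomial_coeff_dirDeriv_pow, Dk_eq_monomial_coeff_dirDeriv_pow]
  obtain _ | m := k
  · simp
  congr 1
  rw [← sub_eq_zero, ← coeff_sub, ← LinearMap.sub_apply]
  refine coeff_dirDeriv_pow_sub_pow_eq_zero fun γ hαγ hγ => ?_
  have hD1 := congrArg (coeff γ) (h γ hαγ (by change γ.degree + 1 = α.degree + (m + 1); omega))
  simpa [Dk_eq_monomial_coeff_dirDeriv_pow, sub_eq_zero] using hD1

/-- If `D^1_{a,β}(f) = D^1_{b,β}(f)` for all `β ≥ α` with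
`|β| = |α| + k - 1`, then `D^k_{a,α}(f) = D^k_{b,α}(f)`. -/
theorem Dk_eq_of_D1_eq (f : MvPolynomial (Fin n) F) (a b : Fin n → F)
    (α : Fin n →₀ ℕ) (k : ℕ) (hk : 1 ≤ k)
    (h : ∀ β : Fin n →₀ ℕ, α ≤ β →
        (β.sum fun _ e => e) + 1 = (α.sum fun _ e => e) + k →
        Dk a β 1 f = Dk b β 1 f) :
    Dk a α k f = Dk b α k f :=
  Dk_eq_of_D1_eq_general f a b α k h

end
end
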